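/- Let μ₁, μ₂ be probability distributions on [-1,1]^n, and let x₁, x₂ ∈ {-1,+1}^n be standard randomized roundings of samples m₁ ∼ μ₁, m₂ ∼ μ₂ (i.e., coordinates of x_i are conditionally independent given m_i with E[x_i | m_i] = m_i). Then W_{2,n}(L(x₁), L(x₂)) ≤ 2 √(W_{2,n}(μ₁, μ₂)). -/

import Mathlib

open MeasureTheory Set Finset

/-- Squared normalized transport costs of all couplings of `μ` and `ν`. -/
noncomputable def couplingCosts (d : ℕ) (μ ν : Measure (Fin d → ℝ)) : Set ℝ :=
  {r | ∃ π : Measure ((Fin d → ℝ) × (Fin d → ℝ)),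
    π.map Prod.fst = μ ∧ π.map Prod.snd = ν ∧
    r = (1 / (d : ℝ)) * ∫ p, (∑ i, (p.1 i - p.2 i) ^ 2) ∂π}

/-- The normalized 2-Wasserstein distance `W_{2,n}`. -/
noncomputable def W2n (d : ℕ) (μ ν : Measure (Fin d → ℝ)) : ℝ :=
  Real.sqrt (sInf (couplingCosts d μ ν))

/-- The law of the standard randomized rounding of `m ∈ [-1,1]^d`: coordinates are
independent, equal to `+1` with probability `(1+mᵢ)/2` and `-1` with probability
`(1-mᵢ)/2`; in particular the conditional mean is `m`. -/
noncomputable def roundingLaw (d : ℕ) (m : Fin d → ℝ) : Measure (Fin d → ℝ) :=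
  Measure.pi fun i =>
    ENNReal.ofReal ((1 + m i) / 2) • Measure.dirac (1 : ℝ) +
      ENNReal.ofReal ((1 - m i) / 2) • Measure.dirac (-1 : ℝ)

namespace Stmt4Aux

noncomputable section
open scoped Classical ENNReal

/-! ### Pointwise real lemmas -/

/-- clamp to [-1,1] -/
def cl (x : ℝ) : ℝ := max (-1) (min 1 x)

lemma measurable_cl : Measurable cl := by unfold cl; fun_prop

lemma cl_mem (x : ℝ) : cl x ∈ Icc (-1:ℝ) 1 := by
  refine ⟨le_max_left _ _, max_le (by norm_num) (min_le_left _ _)⟩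

lemma cl_eq_self {x : ℝ} (hx : x ∈ Icc (-1:ℝ) 1) : cl x = x := by
  rcases hx with ⟨h1, h2⟩
  simp [cl, min_eq_right h2, max_eq_right h1]

lemma abs_cl_sub_cl (x y : ℝ) : |cl x - cl y| ≤ |x - y| := by
  have key : |min 1 x - min 1 y| ≤ |x - y| → |cl x - cl y| ≤ |x - y| := by
    intro h
    refine le_trans ?_ h
    rw [cl, cl, max_comm (-1) (min 1 x), max_comm (-1) (min 1 y)]
    exact abs_max_sub_max_le_abs _ _ _
  apply key
  have h1 := le_abs_self (x - y); have h2 := neg_abs_le (x - y)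
  rcases le_total (1:ℝ) x with hx | hx <;> rcases le_total (1:ℝ) y with hy | hy
  · rw [min_eq_left hx, min_eq_left hy]; simp
  · rw [min_eq_left hx, min_eq_right hy, abs_sub_le_iff]; constructor <;> linarith
  · rw [min_eq_right hx, min_eq_left hy, abs_sub_le_iff]; constructor <;> linarith
  · rw [min_eq_right hx, min_eq_right hy]

def pt (b : Bool) : ℝ := if b then 1 else -1

def wt (a : ℝ) (b : Bool) : ℝ := if b then (1 + a) / 2 else (1 - a) / 2

lemma wt_nonneg {a : ℝ} (ha : a ∈ Icc (-1:ℝ) 1) (b : Bool) : 0 ≤ wt a b := by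
  rcases ha with ⟨h1, h2⟩; cases b <;> simp [wt] <;> linarith

lemma wt_sum (a : ℝ) : wt a true + wt a false = 1 := by simp [wt]; ring

def V (a b : ℝ) : Bool × Bool → ℝ
  | (true, true) => min ((1 + a) / 2) ((1 + b) / 2)
  | (false, false) => min ((1 - a) / 2) ((1 - b) / 2)
  | (true, false) => (1 + a) / 2 - min ((1 + a) / 2) ((1 + b) / 2)
  | (false, true) => (1 + b) / 2 - min ((1 + a) / 2) ((1 + b) / 2)

lemma V_nonneg {a b : ℝ} (ha : a ∈ Icc (-1:ℝ) 1) (hb : b ∈ Icc (-1:ℝ) 1) (e : Bool × Bool) :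
    0 ≤ V a b e := by
  rcases ha with ⟨ha1, ha2⟩; rcases hb with ⟨hb1, hb2⟩
  rcases e with ⟨(_|_), (_|_)⟩ <;>
    rcases le_total ((1+a)/2) ((1+b)/2) with h | h <;>
    rcases le_total ((1-a)/2) ((1-b)/2) with h' | h' <;>
    simp [V, min_eq_left, min_eq_right, h, h'] <;> linarith

lemma V_margin_fst (a b : ℝ) (b₁ : Bool) :
    V a b (b₁, true) + V a b (b₁, false) = wt a b₁ := by
  rcases le_total ((1+a)/2) ((1+b)/2) with h | h <;>
  cases b₁
  · simp only [V, wt, min_eq_left h,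
      min_eq_right (show (1-b)/2 ≤ (1-a)/2 by linarith), Bool.false_eq_true, if_false]; ring
  · simp only [V, wt, min_eq_left h, if_true]; ring
  · simp only [V, wt, min_eq_right h,
      min_eq_left (show (1-a)/2 ≤ (1-b)/2 by linarith), Bool.false_eq_true, if_false]; ring
  · simp only [V, wt, min_eq_right h, if_true]; ring

lemma V_margin_snd (a b : ℝ) (b₂ : Bool) :
    V a b (true, b₂) + V a b (false, b₂) = wt b b₂ := by
  rcases le_total ((1+a)/2) ((1+b)/2) with h | h <;>
  cases b₂
  · simp only [V, wt, min_eq_left h,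
      min_eq_right (show (1-b)/2 ≤ (1-a)/2 by linarith), Bool.false_eq_true, if_false]; ring
  · simp only [V, wt, min_eq_left h, if_true]; ring
  · simp only [V, wt, min_eq_right h,
      min_eq_left (show (1-a)/2 ≤ (1-b)/2 by linarith), Bool.false_eq_true, if_false]; ring
  · simp only [V, wt, min_eq_right h, if_true]; ring

lemma V_sum (a b : ℝ) : ∑ e : Bool × Bool, V a b e = 1 := by
  rw [Fintype.sum_prod_type]
  simp only [Fintype.sum_bool]
  rw [V_margin_fst, V_margin_fst, wt_sum]

lemma V_cost (a b : ℝ) :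
    ∑ e : Bool × Bool, V a b e * (pt e.1 - pt e.2) ^ 2 = 2 * |a - b| := by
  rw [Fintype.sum_prod_type]
  simp only [Fintype.sum_bool]
  rcases le_total ((1+a)/2) ((1+b)/2) with h | h
  · rw [abs_of_nonpos (show a - b ≤ 0 by linarith)]
    simp only [V, pt, min_eq_left h, if_true, if_false, Bool.false_eq_true]; ring
  · rw [abs_of_nonneg (show 0 ≤ a - b by linarith)]
    simp only [V, pt, min_eq_right h, if_true, if_false, Bool.false_eq_true]; ring

/-! ### The rounding law as a finite sum of Dirac measures -/

/-- indicator of a conjunction is a product of indicators -/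
lemma ite_all_eq_prod {ι : Type*} [Fintype ι] (P : ι → Prop) [DecidablePred P]
    [Decidable (∀ i, P i)] :
    (if ∀ i, P i then (1:ℝ≥0∞) else 0) = ∏ i, if P i then 1 else 0 := by
  by_cases h : ∀ i, P i
  · simp [h]
  · push_neg at h
    obtain ⟨i, hi⟩ := h
    rw [if_neg (by intro h'; exact hi (h' i))]
    exact (Finset.prod_eq_zero (Finset.mem_univ i) (by simp [hi])).symm

def rdS (d : ℕ) (m : Fin d → ℝ) : Measure (Fin d → ℝ) :=
  ∑ ε : Fin d → Bool,
    (∏ i, ENNReal.ofReal (wt (m i) (ε i))) • Measure.dirac (fun i => pt (ε i))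

lemma rdS_apply {d : ℕ} (m : Fin d → ℝ) {s : Set (Fin d → ℝ)} (hs : MeasurableSet s) :
    rdS d m s = ∑ ε : Fin d → Bool,
      (∏ i, ENNReal.ofReal (wt (m i) (ε i))) *
        (if (fun i => pt (ε i)) ∈ s then 1 else 0) := by
  rw [rdS, Measure.finset_sum_apply]
  refine Finset.sum_congr rfl fun ε _ => ?_
  rw [Measure.smul_apply, Measure.dirac_apply' _ hs, smul_eq_mul, Set.indicator_apply]
  simp

lemma roundingLaw_eq (d : ℕ) (m : Fin d → ℝ) :
    roundingLaw d m = rdS d m := by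
  haveI : ∀ i : Fin d, IsFiniteMeasure
      (ENNReal.ofReal ((1 + m i) / 2) • Measure.dirac (1 : ℝ) +
        ENNReal.ofReal ((1 - m i) / 2) • Measure.dirac (-1 : ℝ)) := by
    intro i
    refine ⟨?_⟩
    rw [Measure.add_apply, Measure.smul_apply, Measure.smul_apply]
    simp only [measure_univ, smul_eq_mul, mul_one]
    exact ENNReal.add_lt_top.2 ⟨ENNReal.ofReal_lt_top, ENNReal.ofReal_lt_top⟩
  refine Measure.pi_eq fun s hs => ?_
  rw [rdS_apply m (MeasurableSet.univ_pi hs)]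
  have : ∀ ε : Fin d → Bool,
      (if (fun i => pt (ε i)) ∈ Set.pi Set.univ s then (1:ℝ≥0∞) else 0) =
        ∏ i, if pt (ε i) ∈ s i then 1 else 0 := by
    intro ε
    exact (if_congr (Set.mem_univ_pi) rfl rfl).trans (ite_all_eq_prod _)
  simp_rw [this, ← Finset.prod_mul_distrib]
  have hswap := Finset.prod_univ_sum (fun _ : Fin d => (Finset.univ : Finset Bool))
    (fun i b => ENNReal.ofReal (wt (m i) b) * if pt b ∈ s i then 1 else 0)
  rw [Fintype.piFinset_univ] at hswap
  rw [← hswap]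
  refine Finset.prod_congr rfl fun i _ => ?_
  rw [Fintype.sum_bool]
  simp [Measure.add_apply, Measure.smul_apply, Measure.dirac_apply' _ (hs i),
    Set.indicator_apply, wt, pt, smul_eq_mul, mul_comm]

lemma measurable_rdS (d : ℕ) : Measurable (rdS d) := by
  refine Measure.measurable_of_measurable_coe _ fun s hs => ?_
  simp_rw [rdS_apply _ hs]
  refine Finset.measurable_sum _ fun ε _ => Measurable.mul_const ?_ _
  refine Finset.measurable_prod _ fun i _ => ?_
  refine ENNReal.measurable_ofReal.comp ?_
  have : Measurable fun a : ℝ => wt a (ε i) := by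
    cases (ε i) <;> simp only [wt, if_true, if_false, Bool.false_eq_true] <;> fun_prop
  exact this.comp (measurable_pi_apply i)

lemma measurable_roundingLaw (d : ℕ) : Measurable (roundingLaw d) := by
  have : roundingLaw d = rdS d := funext fun m => roundingLaw_eq d m
  rw [this]; exact measurable_rdS d

/-! ### The coupled rounding kernel -/

def jK (d : ℕ) (p : (Fin d → ℝ) × (Fin d → ℝ)) : Measure ((Fin d → ℝ) × (Fin d → ℝ)) :=
  ∑ ε : Fin d → Bool × Bool,
    (∏ i, ENNReal.ofReal (V (cl (p.1 i)) (cl (p.2 i)) (ε i))) •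
      Measure.dirac (fun i => pt (ε i).1, fun i => pt (ε i).2)

lemma jK_apply {d : ℕ} (p : (Fin d → ℝ) × (Fin d → ℝ))
    {s : Set ((Fin d → ℝ) × (Fin d → ℝ))} (hs : MeasurableSet s) :
    jK d p s = ∑ ε : Fin d → Bool × Bool,
      (∏ i, ENNReal.ofReal (V (cl (p.1 i)) (cl (p.2 i)) (ε i))) *
        (if ((fun i => pt (ε i).1, fun i => pt (ε i).2) :
            (Fin d → ℝ) × (Fin d → ℝ)) ∈ s then 1 else 0) := by
  rw [jK, Measure.finset_sum_apply]
  refine Finset.sum_congr rfl fun ε _ => ?_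
  rw [Measure.smul_apply, Measure.dirac_apply' _ hs, smul_eq_mul, Set.indicator_apply]
  simp

lemma measurable_V_cl (e : Bool × Bool) :
    Measurable fun q : ℝ × ℝ => V (cl q.1) (cl q.2) e := by
  have hcl : Measurable cl := measurable_cl
  rcases e with ⟨(_|_), (_|_)⟩ <;> simp only [V] <;> fun_prop

lemma measurable_jK (d : ℕ) : Measurable (jK d) := by
  refine Measure.measurable_of_measurable_coe _ fun s hs => ?_
  simp_rw [jK_apply _ hs]
  refine Finset.measurable_sum _ fun ε _ => Measurable.mul_const ?_ _
  refine Finset.measurable_prod _ fun i _ => ?_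
  refine ENNReal.measurable_ofReal.comp ?_
  exact (measurable_V_cl (ε i)).comp
    (Measurable.prodMk ((measurable_pi_apply i).comp measurable_fst)
      ((measurable_pi_apply i).comp measurable_snd) :
      Measurable fun q : (Fin d → ℝ) × (Fin d → ℝ) => (q.1 i, q.2 i))

lemma sum_prod_fiber {d : ℕ} (a b : Fin d → ℝ) (η : Fin d → Bool)
    (margin : ∀ i (b₁ : Bool),
      ENNReal.ofReal (V (a i) (b i) (b₁, true)) + ENNReal.ofReal (V (a i) (b i) (b₁, false))
        = ENNReal.ofReal (wt (a i) b₁)) :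
    (∑ ζ : Fin d → Bool, ∏ i, ENNReal.ofReal (V (a i) (b i) (η i, ζ i)))
      = ∏ i, ENNReal.ofReal (wt (a i) (η i)) := by
  have hswap := Finset.prod_univ_sum (fun _ : Fin d => (Finset.univ : Finset Bool))
    (fun i c => ENNReal.ofReal (V (a i) (b i) (η i, c)))
  rw [Fintype.piFinset_univ] at hswap
  rw [← hswap]
  refine Finset.prod_congr rfl fun i _ => ?_
  rw [Fintype.sum_bool]
  exact margin i (η i)

lemma jK_map_fst {d : ℕ} (p : (Fin d → ℝ) × (Fin d → ℝ)) :
    (jK d p).map Prod.fst = rdS d (fun i => cl (p.1 i)) := by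
  ext s hs
  rw [Measure.map_apply measurable_fst hs, jK_apply _ (measurable_fst hs),
    rdS_apply _ hs]
  have := Equiv.sum_comp (Equiv.arrowProdEquivProdArrow (Fin d) (fun _ => Bool) (fun _ => Bool)).symm
    (fun ε : Fin d → Bool × Bool =>
      (∏ i, ENNReal.ofReal (V (cl (p.1 i)) (cl (p.2 i)) (ε i))) *
        (if ((fun i => pt (ε i).1, fun i => pt (ε i).2) :
            (Fin d → ℝ) × (Fin d → ℝ)) ∈ Prod.fst ⁻¹' s then 1 else 0))
  rw [← this, Fintype.sum_prod_type]
  refine Finset.sum_congr rfl fun η _ => ?_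
  have hsymm : ∀ ζ : Fin d → Bool,
      (Equiv.arrowProdEquivProdArrow (Fin d) (fun _ => Bool) (fun _ => Bool)).symm (η, ζ) = fun i => (η i, ζ i) :=
    fun ζ => rfl
  simp only [hsymm, Set.mem_preimage]
  rw [← Finset.sum_mul]
  rw [sum_prod_fiber (fun i => cl (p.1 i)) (fun i => cl (p.2 i)) η
    (fun i b₁ => by
      rw [← ENNReal.ofReal_add (V_nonneg (cl_mem _) (cl_mem _) _)
        (V_nonneg (cl_mem _) (cl_mem _) _), V_margin_fst])]

lemma jK_map_snd {d : ℕ} (p : (Fin d → ℝ) × (Fin d → ℝ)) :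
    (jK d p).map Prod.snd = rdS d (fun i => cl (p.2 i)) := by
  ext s hs
  rw [Measure.map_apply measurable_snd hs, jK_apply _ (measurable_snd hs),
    rdS_apply _ hs]
  have := Equiv.sum_comp (Equiv.arrowProdEquivProdArrow (Fin d) (fun _ => Bool) (fun _ => Bool)).symm
    (fun ε : Fin d → Bool × Bool =>
      (∏ i, ENNReal.ofReal (V (cl (p.1 i)) (cl (p.2 i)) (ε i))) *
        (if ((fun i => pt (ε i).1, fun i => pt (ε i).2) :
            (Fin d → ℝ) × (Fin d → ℝ)) ∈ Prod.snd ⁻¹' s then 1 else 0))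
  rw [← this, Fintype.sum_prod_type, Finset.sum_comm]
  refine Finset.sum_congr rfl fun ζ _ => ?_
  have hsymm : ∀ η : Fin d → Bool,
      (Equiv.arrowProdEquivProdArrow (Fin d) (fun _ => Bool) (fun _ => Bool)).symm (η, ζ) = fun i => (η i, ζ i) :=
    fun η => rfl
  simp only [hsymm, Set.mem_preimage]
  rw [← Finset.sum_mul]
  have hfiber : (∑ η : Fin d → Bool, ∏ i, ENNReal.ofReal (V (cl (p.1 i)) (cl (p.2 i)) (η i, ζ i)))
      = ∏ i, ENNReal.ofReal (wt (cl (p.2 i)) (ζ i)) := by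
    have hswap := Finset.prod_univ_sum (fun _ : Fin d => (Finset.univ : Finset Bool))
      (fun i c => ENNReal.ofReal (V (cl (p.1 i)) (cl (p.2 i)) (c, ζ i)))
    rw [Fintype.piFinset_univ] at hswap
    rw [← hswap]
    refine Finset.prod_congr rfl fun i _ => ?_
    rw [Fintype.sum_bool, ← ENNReal.ofReal_add (V_nonneg (cl_mem _) (cl_mem _) _)
      (V_nonneg (cl_mem _) (cl_mem _) _), V_margin_snd]
  rw [hfiber]

lemma lintegral_jK {d : ℕ} (p : (Fin d → ℝ) × (Fin d → ℝ))
    (f : (Fin d → ℝ) × (Fin d → ℝ) → ℝ≥0∞) (hf : Measurable f) :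
    ∫⁻ q, f q ∂(jK d p) = ∑ ε : Fin d → Bool × Bool,
      (∏ i, ENNReal.ofReal (V (cl (p.1 i)) (cl (p.2 i)) (ε i))) *
        f (fun i => pt (ε i).1, fun i => pt (ε i).2) := by
  rw [jK, lintegral_finset_sum_measure]
  refine Finset.sum_congr rfl fun ε _ => ?_
  rw [lintegral_smul_measure, lintegral_dirac' _ hf, smul_eq_mul]

/-! ### The cost of the coupled rounding kernel -/

lemma real_cost_identity {d : ℕ} (a b : Fin d → ℝ) :
    ∑ ε : Fin d → Bool × Bool,
      (∏ i, V (a i) (b i) (ε i)) * (∑ i, (pt (ε i).1 - pt (ε i).2) ^ 2)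
      = 2 * ∑ i, |a i - b i| := by
  simp_rw [Finset.mul_sum]
  rw [Finset.sum_comm]
  refine Finset.sum_congr rfl fun i _ => ?_
  have hterm : ∀ ε : Fin d → Bool × Bool,
      (∏ j, V (a j) (b j) (ε j)) * (pt (ε i).1 - pt (ε i).2) ^ 2
        = ∏ j, (V (a j) (b j) (ε j) *
            if j = i then (pt (ε j).1 - pt (ε j).2) ^ 2 else 1) := by
    intro ε
    rw [Finset.prod_mul_distrib]
    congr 1
    rw [Finset.prod_ite_eq' Finset.univ i (fun j => (pt (ε j).1 - pt (ε j).2) ^ 2)]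
    simp
  simp_rw [hterm]
  have hswap := Finset.prod_univ_sum (fun _ : Fin d => (Finset.univ : Finset (Bool × Bool)))
    (fun j e => V (a j) (b j) e * if j = i then (pt e.1 - pt e.2) ^ 2 else 1)
  rw [Fintype.piFinset_univ] at hswap
  rw [← hswap]
  have hfac : ∀ j, (∑ e : Bool × Bool, V (a j) (b j) e *
      if j = i then (pt e.1 - pt e.2) ^ 2 else 1)
      = if j = i then 2 * |a j - b j| else 1 := by
    intro j
    by_cases hji : j = i
    · subst hji
      simp only [if_pos rfl]
      exact V_cost (a j) (b j)
    · simp only [if_neg hji, mul_one]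
      exact V_sum _ _
  simp_rw [hfac]
  rw [Finset.prod_ite_eq' Finset.univ i (fun j => 2 * |a j - b j|)]
  simp [mul_comm]

lemma lintegral_cost_jK {d : ℕ} (p : (Fin d → ℝ) × (Fin d → ℝ)) :
    ∫⁻ q, ENNReal.ofReal (∑ i, (q.1 i - q.2 i) ^ 2) ∂(jK d p)
      = ENNReal.ofReal (2 * ∑ i, |cl (p.1 i) - cl (p.2 i)|) := by
  rw [lintegral_jK p _ (by fun_prop)]
  have : ∀ ε : Fin d → Bool × Bool,
      (∏ i, ENNReal.ofReal (V (cl (p.1 i)) (cl (p.2 i)) (ε i))) *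
        ENNReal.ofReal (∑ i, (pt (ε i).1 - pt (ε i).2) ^ 2)
      = ENNReal.ofReal ((∏ i, V (cl (p.1 i)) (cl (p.2 i)) (ε i)) *
          (∑ i, (pt (ε i).1 - pt (ε i).2) ^ 2)) := by
    intro ε
    rw [← ENNReal.ofReal_prod_of_nonneg
      (fun i _ => V_nonneg (cl_mem _) (cl_mem _) _),
      ← ENNReal.ofReal_mul
        (Finset.prod_nonneg fun i _ => V_nonneg (cl_mem _) (cl_mem _) _)]
  simp_rw [this]
  rw [← ENNReal.ofReal_sum_of_nonneg fun ε _ => mul_nonneg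
    (Finset.prod_nonneg fun i _ => V_nonneg (cl_mem _) (cl_mem _) _)
    (Finset.sum_nonneg fun i _ => sq_nonneg _)]
  rw [real_cost_identity]

/-! ### Assembly -/

lemma couplingCosts_nonneg {d : ℕ} {μ ν : Measure (Fin d → ℝ)} {r : ℝ}
    (hr : r ∈ couplingCosts d μ ν) : 0 ≤ r := by
  obtain ⟨π, -, -, rfl⟩ := hr
  exact mul_nonneg (by positivity)
    (integral_nonneg fun q => Finset.sum_nonneg fun i _ => sq_nonneg _)

lemma key {d : ℕ} (μ₁ μ₂ : Measure (Fin d → ℝ))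
    [IsProbabilityMeasure μ₁] [IsProbabilityMeasure μ₂]
    (hμ₁ : μ₁ {m | ∀ i, m i ∈ Icc (-1 : ℝ) 1}ᶜ = 0)
    (hμ₂ : μ₂ {m | ∀ i, m i ∈ Icc (-1 : ℝ) 1}ᶜ = 0)
    {t : ℝ} (ht : t ∈ couplingCosts d μ₁ μ₂) :
    ∃ r' ∈ couplingCosts d (μ₁.bind (roundingLaw d)) (μ₂.bind (roundingLaw d)),
      r' ≤ 2 * Real.sqrt t := by
  obtain ⟨π, hπ1, hπ2, hteq⟩ := ht
  have ht0 : 0 ≤ t := couplingCosts_nonneg ⟨π, hπ1, hπ2, hteq⟩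
  haveI : IsProbabilityMeasure π := by
    constructor
    have h : π Set.univ = μ₁ Set.univ := by
      rw [← hπ1, Measure.map_apply measurable_fst MeasurableSet.univ, Set.preimage_univ]
    rw [h, measure_univ]
  set f : (Fin d → ℝ) × (Fin d → ℝ) → ℝ := fun q => ∑ i, (q.1 i - q.2 i) ^ 2 with hfdef
  have hf_meas : Measurable f := by
    refine Finset.measurable_sum _ fun i _ => ?_
    exact (((measurable_pi_apply i).comp measurable_fst).sub
      ((measurable_pi_apply i).comp measurable_snd)).pow_const 2
  have hf_nonneg : ∀ q, 0 ≤ f q := fun q => Finset.sum_nonneg fun i _ => sq_nonneg _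
  -- cube facts
  have hcube_meas : MeasurableSet {m : Fin d → ℝ | ∀ i, m i ∈ Icc (-1:ℝ) 1} := by
    have : {m : Fin d → ℝ | ∀ i, m i ∈ Icc (-1:ℝ) 1}
        = Set.pi Set.univ fun _ => Icc (-1:ℝ) 1 := by
      ext m; simp only [Set.mem_setOf_eq, Set.mem_univ_pi]
    rw [this]; exact MeasurableSet.univ_pi fun _ => measurableSet_Icc
  have hae1 : ∀ᵐ p ∂π, ∀ i, p.1 i ∈ Icc (-1:ℝ) 1 := by
    refine ae_iff.2 ?_
    have : π (Prod.fst ⁻¹' {m : Fin d → ℝ | ∀ i, m i ∈ Icc (-1:ℝ) 1}ᶜ) = 0 := by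
      rw [← Measure.map_apply measurable_fst hcube_meas.compl, hπ1]; exact hμ₁
    exact this
  have hae2 : ∀ᵐ p ∂π, ∀ i, p.2 i ∈ Icc (-1:ℝ) 1 := by
    refine ae_iff.2 ?_
    have : π (Prod.snd ⁻¹' {m : Fin d → ℝ | ∀ i, m i ∈ Icc (-1:ℝ) 1}ᶜ) = 0 := by
      rw [← Measure.map_apply measurable_snd hcube_meas.compl, hπ2]; exact hμ₂
    exact this
  -- marginals of the coupling
  have hmarg1 : (π.bind (jK d)).map Prod.fst = μ₁.bind (roundingLaw d) := by
    ext s hs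
    rw [Measure.map_apply measurable_fst hs,
      Measure.bind_apply (measurable_fst hs) (measurable_jK d).aemeasurable,
      Measure.bind_apply hs (measurable_roundingLaw d).aemeasurable]
    have hstep : ∀ p : (Fin d → ℝ) × (Fin d → ℝ),
        jK d p (Prod.fst ⁻¹' s) = rdS d (fun i => cl (p.1 i)) s := by
      intro p
      rw [← Measure.map_apply measurable_fst hs, jK_map_fst]
    simp_rw [hstep]
    have hmeasF : Measurable fun m : Fin d → ℝ => rdS d (fun i => cl (m i)) s := by
      refine (Measure.measurable_coe hs).comp ((measurable_rdS d).comp ?_)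
      exact measurable_pi_lambda _ fun i => measurable_cl.comp (measurable_pi_apply i)
    calc ∫⁻ p, rdS d (fun i => cl (p.1 i)) s ∂π
        = ∫⁻ m, rdS d (fun i => cl (m i)) s ∂(π.map Prod.fst) := by
          rw [lintegral_map hmeasF measurable_fst]
      _ = ∫⁻ m, rdS d (fun i => cl (m i)) s ∂μ₁ := by rw [hπ1]
      _ = ∫⁻ m, roundingLaw d m s ∂μ₁ := by
          refine lintegral_congr_ae ?_
          have hμae : ∀ᵐ m ∂μ₁, ∀ i, m i ∈ Icc (-1:ℝ) 1 := ae_iff.2 hμ₁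
          filter_upwards [hμae] with m hm
          rw [show (fun i => cl (m i)) = m from funext fun i => cl_eq_self (hm i),
            roundingLaw_eq]
  have hmarg2 : (π.bind (jK d)).map Prod.snd = μ₂.bind (roundingLaw d) := by
    ext s hs
    rw [Measure.map_apply measurable_snd hs,
      Measure.bind_apply (measurable_snd hs) (measurable_jK d).aemeasurable,
      Measure.bind_apply hs (measurable_roundingLaw d).aemeasurable]
    have hstep : ∀ p : (Fin d → ℝ) × (Fin d → ℝ),
        jK d p (Prod.snd ⁻¹' s) = rdS d (fun i => cl (p.2 i)) s := by
      intro p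
      rw [← Measure.map_apply measurable_snd hs, jK_map_snd]
    simp_rw [hstep]
    have hmeasF : Measurable fun m : Fin d → ℝ => rdS d (fun i => cl (m i)) s := by
      refine (Measure.measurable_coe hs).comp ((measurable_rdS d).comp ?_)
      exact measurable_pi_lambda _ fun i => measurable_cl.comp (measurable_pi_apply i)
    calc ∫⁻ p, rdS d (fun i => cl (p.2 i)) s ∂π
        = ∫⁻ m, rdS d (fun i => cl (m i)) s ∂(π.map Prod.snd) := by
          rw [lintegral_map hmeasF measurable_snd]
      _ = ∫⁻ m, rdS d (fun i => cl (m i)) s ∂μ₂ := by rw [hπ2]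
      _ = ∫⁻ m, roundingLaw d m s ∂μ₂ := by
          refine lintegral_congr_ae ?_
          have hμae : ∀ᵐ m ∂μ₂, ∀ i, m i ∈ Icc (-1:ℝ) 1 := ae_iff.2 hμ₂
          filter_upwards [hμae] with m hm
          rw [show (fun i => cl (m i)) = m from funext fun i => cl_eq_self (hm i),
            roundingLaw_eq]
  refine ⟨(1 / (d:ℝ)) * ∫ q, f q ∂(π.bind (jK d)),
    ⟨π.bind (jK d), hmarg1, hmarg2, rfl⟩, ?_⟩
  rcases Nat.eq_zero_or_pos d with hd | hd
  · subst hd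
    simp only [Nat.cast_zero, div_zero, zero_mul]
    positivity
  have hd0 : (0:ℝ) < d := by exact_mod_cast hd
  -- the lintegral over π of the cost
  set L : ℝ≥0∞ := ∫⁻ p, ENNReal.ofReal (f p) ∂π with hLdef
  have hbound : ∀ᵐ p ∂π, ENNReal.ofReal (f p) ≤ ENNReal.ofReal (4 * d) := by
    filter_upwards [hae1, hae2] with p hp1 hp2
    refine ENNReal.ofReal_le_ofReal ?_
    calc f p ≤ ∑ _i : Fin d, (4:ℝ) := by
          refine Finset.sum_le_sum fun i _ => ?_
          have h1 := hp1 i; have h2 := hp2 i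
          rcases h1 with ⟨a1, a2⟩; rcases h2 with ⟨b1, b2⟩
          nlinarith
      _ = 4 * d := by simp [mul_comm]
  have hL_ne_top : L ≠ ⊤ := by
    refine ne_of_lt (lt_of_le_of_lt (lintegral_mono_ae hbound) ?_)
    rw [lintegral_const, measure_univ, mul_one]
    exact ENNReal.ofReal_lt_top
  -- integral/lintegral conversions
  have hint1 : ∫ q, f q ∂(π.bind (jK d))
      = (∫⁻ q, ENNReal.ofReal (f q) ∂(π.bind (jK d))).toReal :=
    integral_eq_lintegral_of_nonneg_ae (Filter.Eventually.of_forall hf_nonneg)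
      hf_meas.aestronglyMeasurable
  have hint2 : ∫ p, f p ∂π = L.toReal :=
    integral_eq_lintegral_of_nonneg_ae (Filter.Eventually.of_forall hf_nonneg)
      hf_meas.aestronglyMeasurable
  -- compute the lintegral over the coupling
  have hG : ∫⁻ q, ENNReal.ofReal (f q) ∂(π.bind (jK d))
      = ∫⁻ p, ENNReal.ofReal (2 * ∑ i, |cl (p.1 i) - cl (p.2 i)|) ∂π := by
    rw [Measure.lintegral_bind (measurable_jK d).aemeasurable hf_meas.ennreal_ofReal.aemeasurable]
    exact lintegral_congr fun p => lintegral_cost_jK p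
  -- pointwise bound
  have hpt : ∀ p : (Fin d → ℝ) × (Fin d → ℝ),
      ENNReal.ofReal (2 * ∑ i, |cl (p.1 i) - cl (p.2 i)|)
        ≤ ENNReal.ofReal (2 * Real.sqrt d) * (ENNReal.ofReal (f p)) ^ (1/2:ℝ) := by
    intro p
    have h1 : ∑ i, |cl (p.1 i) - cl (p.2 i)| ≤ ∑ i, |p.1 i - p.2 i| :=
      Finset.sum_le_sum fun i _ => abs_cl_sub_cl _ _
    have h2 : ∑ i, |p.1 i - p.2 i| ≤ Real.sqrt d * Real.sqrt (f p) := by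
      rw [← Real.sqrt_mul (by positivity)]
      rw [Real.le_sqrt (Finset.sum_nonneg fun i _ => abs_nonneg _)
        (by positivity : (0:ℝ) ≤ (d:ℝ) * f p)]
      calc (∑ i, |p.1 i - p.2 i|) ^ 2
          ≤ (Finset.univ.card : ℝ) * ∑ i, |p.1 i - p.2 i| ^ 2 :=
            sq_sum_le_card_mul_sum_sq
        _ = (d:ℝ) * f p := by
            have hc : ((Finset.univ : Finset (Fin d)).card : ℝ) = (d:ℝ) := by simp
            rw [hc]
            congr 1
            exact Finset.sum_congr rfl fun i _ => sq_abs _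
    calc ENNReal.ofReal (2 * ∑ i, |cl (p.1 i) - cl (p.2 i)|)
        ≤ ENNReal.ofReal (2 * Real.sqrt d * Real.sqrt (f p)) := by
          refine ENNReal.ofReal_le_ofReal ?_
          have := h1.trans h2
          nlinarith [Real.sqrt_nonneg (d:ℝ), Real.sqrt_nonneg (f p)]
      _ = ENNReal.ofReal (2 * Real.sqrt d) * ENNReal.ofReal (Real.sqrt (f p)) := by
          rw [ENNReal.ofReal_mul (by positivity)]
      _ = ENNReal.ofReal (2 * Real.sqrt d) * (ENNReal.ofReal (f p)) ^ (1/2:ℝ) := by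
          rw [show Real.sqrt (f p) = (f p) ^ (1/2:ℝ) from Real.sqrt_eq_rpow _,
            ENNReal.ofReal_rpow_of_nonneg (hf_nonneg p) (by norm_num)]
  -- Hölder
  have hH : ∫⁻ p, (ENNReal.ofReal (f p)) ^ (1/2:ℝ) ∂π ≤ L ^ (1/2:ℝ) := by
    have := ENNReal.lintegral_mul_norm_pow_le (μ := π)
      (f := fun p => ENNReal.ofReal (f p)) (g := fun _ => 1)
      hf_meas.ennreal_ofReal.aemeasurable aemeasurable_const
      (by norm_num : (0:ℝ) ≤ 1/2) (by norm_num : (0:ℝ) ≤ 1/2) (by norm_num)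
    simpa [ENNReal.one_rpow, lintegral_one, measure_univ] using this
  have hGle : ∫⁻ q, ENNReal.ofReal (f q) ∂(π.bind (jK d))
      ≤ ENNReal.ofReal (2 * Real.sqrt d) * L ^ (1/2:ℝ) := by
    rw [hG]
    calc ∫⁻ p, ENNReal.ofReal (2 * ∑ i, |cl (p.1 i) - cl (p.2 i)|) ∂π
        ≤ ∫⁻ p, ENNReal.ofReal (2 * Real.sqrt d) * (ENNReal.ofReal (f p)) ^ (1/2:ℝ) ∂π :=
          lintegral_mono hpt
      _ = ENNReal.ofReal (2 * Real.sqrt d) * ∫⁻ p, (ENNReal.ofReal (f p)) ^ (1/2:ℝ) ∂π :=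
          lintegral_const_mul' _ _ ENNReal.ofReal_ne_top
      _ ≤ ENNReal.ofReal (2 * Real.sqrt d) * L ^ (1/2:ℝ) := mul_le_mul_right hH _
  -- pass to real integrals
  have hfinal : ∫ q, f q ∂(π.bind (jK d)) ≤ 2 * Real.sqrt d * Real.sqrt (∫ p, f p ∂π) := by
    rw [hint1, hint2]
    have hne : ENNReal.ofReal (2 * Real.sqrt d) * L ^ (1/2:ℝ) ≠ ⊤ :=
      ENNReal.mul_ne_top ENNReal.ofReal_ne_top
        (ENNReal.rpow_ne_top_of_nonneg (by norm_num) hL_ne_top)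
    refine (ENNReal.toReal_mono hne hGle).trans_eq ?_
    rw [ENNReal.toReal_mul, ENNReal.toReal_ofReal (by positivity),
      ← ENNReal.toReal_rpow, show Real.sqrt L.toReal = L.toReal ^ (1/2:ℝ) from
        Real.sqrt_eq_rpow _]
  -- final arithmetic
  have hdt : ∫ p, f p ∂π = (d:ℝ) * t := by
    rw [hteq]; field_simp
  calc (1 / (d:ℝ)) * ∫ q, f q ∂(π.bind (jK d))
      ≤ (1 / (d:ℝ)) * (2 * Real.sqrt d * Real.sqrt ((d:ℝ) * t)) := by
        rw [← hdt]
        exact mul_le_mul_of_nonneg_left hfinal (by positivity)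
    _ = 2 * Real.sqrt t := by
        rw [Real.sqrt_mul (le_of_lt hd0)]
        have hss : Real.sqrt d * Real.sqrt d = (d:ℝ) := Real.mul_self_sqrt hd0.le
        field_simp
        linear_combination (Real.sqrt t) * hss

end

end Stmt4Aux

open Stmt4Aux in
/-- Randomized rounding is continuous in `W_{2,n}`. -/
theorem stmt4 {d : ℕ} (μ₁ μ₂ : Measure (Fin d → ℝ))
    [IsProbabilityMeasure μ₁] [IsProbabilityMeasure μ₂]
    (hμ₁ : μ₁ {m | ∀ i, m i ∈ Icc (-1 : ℝ) 1}ᶜ = 0)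
    (hμ₂ : μ₂ {m | ∀ i, m i ∈ Icc (-1 : ℝ) 1}ᶜ = 0) :
    W2n d (μ₁.bind (roundingLaw d)) (μ₂.bind (roundingLaw d)) ≤
      2 * Real.sqrt (W2n d μ₁ μ₂) := by
  classical
  have hne : (couplingCosts d μ₁ μ₂).Nonempty :=
    ⟨_, μ₁.prod μ₂, by simp, by simp, rfl⟩
  set s := sInf (couplingCosts d μ₁ μ₂) with hs
  have hs0 : 0 ≤ s := le_csInf hne fun r hr => couplingCosts_nonneg hr
  have hbddR : BddBelow (couplingCosts d (μ₁.bind (roundingLaw d)) (μ₂.bind (roundingLaw d))) :=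
    ⟨0, fun r hr => couplingCosts_nonneg hr⟩
  have hA : sInf (couplingCosts d (μ₁.bind (roundingLaw d)) (μ₂.bind (roundingLaw d)))
      ≤ 2 * Real.sqrt s := by
    refine le_of_forall_pos_le_add fun ε hε => ?_
    obtain ⟨t, htmem, htlt⟩ := Real.lt_sInf_add_pos hne (show 0 < (ε/2)^2 by positivity)
    obtain ⟨r', hr'mem, hr'le⟩ := key μ₁ μ₂ hμ₁ hμ₂ htmem
    refine (csInf_le hbddR hr'mem).trans (hr'le.trans ?_)
    have ht0 : 0 ≤ t := couplingCosts_nonneg htmem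
    have h1 : Real.sqrt t ≤ Real.sqrt (s + (ε/2)^2) := Real.sqrt_le_sqrt htlt.le
    have h2 : Real.sqrt (s + (ε/2)^2) ≤ Real.sqrt s + ε/2 := by
      have hsq := Real.sq_sqrt hs0
      have hnn := Real.sqrt_nonneg s
      have hstep : s + (ε/2)^2 ≤ (Real.sqrt s + ε/2)^2 := by nlinarith
      calc Real.sqrt (s + (ε/2)^2) ≤ Real.sqrt ((Real.sqrt s + ε/2)^2) :=
            Real.sqrt_le_sqrt hstep
        _ = Real.sqrt s + ε/2 := Real.sqrt_sq (by positivity)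
    linarith
  unfold W2n
  rw [← hs]
  have h4 : sInf (couplingCosts d (μ₁.bind (roundingLaw d)) (μ₂.bind (roundingLaw d)))
      ≤ (2 * Real.sqrt (Real.sqrt s)) ^ 2 := by
    have hexp : (2 * Real.sqrt (Real.sqrt s)) ^ 2 = 4 * Real.sqrt s := by
      rw [mul_pow, Real.sq_sqrt (Real.sqrt_nonneg s)]; norm_num
    rw [hexp]
    have := Real.sqrt_nonneg s
    linarith
  calc Real.sqrt (sInf (couplingCosts d (μ₁.bind (roundingLaw d)) (μ₂.bind (roundingLaw d))))
      ≤ Real.sqrt ((2 * Real.sqrt (Real.sqrt s)) ^ 2) := Real.sqrt_le_sqrt h4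
    _ = 2 * Real.sqrt (Real.sqrt s) := Real.sqrt_sq (by positivity)
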